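/- Let 𝒳 ⊆ ℝⁿ be open and convex, 𝒪 ⊆ 𝒳 closed, 𝒳_free := closure(𝒳) \ interior(𝒪), and let γ be a path in 𝒳_free from x_a to x_r such that for all s, t ∈ [0,1] the point (1−t)·γ(s) + t·x_a does not lie in interior(𝒪). Then γ is path-homotopic within 𝒳_free to the straight-line path l_{x_a,x_r}. (This is the key step showing that non-entanglement under the Obstacle-free Linear Homotopy definition implies non-entanglement under the Path Class-Relaxed Local Visibility Homotopy definition.) -/

import Mathlib

/-!
The linear homotopy `(s, t) ↦ (1 - t) • γ s + t • x_a` sweeps out the union of the segments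
`[x_a, γ s]`, which by hypothesis lies in the free workspace. This union is star-shaped about
`x_a`, hence contractible and simply connected, and it contains both `γ` and the segment
`[x_a, x_r] = [x_a, γ 1]`; so the two paths are already homotopic inside it.
-/

open Set

noncomputable section

/-- `γ`, restricted to `[0,1]`, is a path in `F` from `x` to `y`. -/
def IsPathIn {E : Type*} [TopologicalSpace E] (F : Set E) (γ : ℝ → E) (x y : E) : Prop :=
  ContinuousOn γ (Icc 0 1) ∧ (∀ s ∈ Icc (0:ℝ) 1, γ s ∈ F) ∧ γ 0 = x ∧ γ 1 = y

/-- `γ` is a shortest path in `F` from `x` to `y`, where the length of a path is its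
total variation on `[0,1]`. -/
def IsShortestPathIn {E : Type*} [PseudoEMetricSpace E] (F : Set E) (γ : ℝ → E) (x y : E) :
    Prop :=
  IsPathIn F γ x y ∧
    ∀ γ' : ℝ → E, IsPathIn F γ' x y → eVariationOn γ (Icc 0 1) ≤ eVariationOn γ' (Icc 0 1)

/-- `γ₀` and `γ₁` (as paths parametrized on `[0,1]`) are homotopic relative to their
endpoints through maps with values in `S`. -/
def PathHomotopicIn {E : Type*} [TopologicalSpace E] (S : Set E) (γ₀ γ₁ : ℝ → E) : Prop :=
  ∃ H : ℝ × ℝ → E,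
    ContinuousOn H ((Icc (0:ℝ) 1) ×ˢ (Icc (0:ℝ) 1)) ∧
    (∀ p ∈ (Icc (0:ℝ) 1) ×ˢ (Icc (0:ℝ) 1), H p ∈ S) ∧
    (∀ s ∈ Icc (0:ℝ) 1, H (s, 0) = γ₀ s) ∧
    (∀ s ∈ Icc (0:ℝ) 1, H (s, 1) = γ₁ s) ∧
    (∀ t ∈ Icc (0:ℝ) 1, H (0, t) = γ₀ 0) ∧
    (∀ t ∈ Icc (0:ℝ) 1, H (1, t) = γ₀ 1)

/-- The restriction of `γ` to `[s₁, s₂]`, reparametrized to `[0,1]`. -/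
def subPath {E : Type*} (γ : ℝ → E) (s₁ s₂ : ℝ) : ℝ → E := fun s => γ (s₁ + s * (s₂ - s₁))

/-- The straight-line path from `p` to `q`. -/
def linePath {E : Type*} [AddCommGroup E] [Module ℝ E] (p q : E) : ℝ → E :=
  fun t => (1 - t) • p + t • q

section PathHomotopy

variable {E : Type*} [TopologicalSpace E] {S T : Set E} {γ γ₀ γ₁ : ℝ → E} {x y : E}

theorem IsPathIn.left_mem (h : IsPathIn S γ x y) : x ∈ S :=
  h.2.2.1 ▸ h.2.1 0 (left_mem_Icc.2 zero_le_one)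

theorem IsPathIn.right_mem (h : IsPathIn S γ x y) : y ∈ S :=
  h.2.2.2 ▸ h.2.1 1 (right_mem_Icc.2 zero_le_one)

def IsPathIn.toPath (h : IsPathIn S γ x y) :
    Path (⟨x, h.left_mem⟩ : S) ⟨y, h.right_mem⟩ where
  toFun s := ⟨γ s, h.2.1 s s.2⟩
  continuous_toFun :=
    (continuousOn_iff_continuous_domRestrict.1 h.1).subtype_mk _
  source' := Subtype.ext h.2.2.1
  target' := Subtype.ext h.2.2.2

theorem PathHomotopicIn.of_homotopic (h₀ : IsPathIn S γ₀ x y) (h₁ : IsPathIn S γ₁ x y)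
    (hom : h₀.toPath.Homotopic h₁.toPath) : PathHomotopicIn S γ₀ γ₁ := by
  obtain ⟨F⟩ := hom
  refine ⟨fun p ↦ F (projIcc 0 1 zero_le_one p.2, projIcc 0 1 zero_le_one p.1),
    by fun_prop, fun p _ ↦ (F _).2, fun s hs ↦ ?_, fun s hs ↦ ?_, fun t _ ↦ ?_, fun t _ ↦ ?_⟩
  · simp only [projIcc_left, projIcc_of_mem _ hs]
    exact congrArg Subtype.val (F.apply_zero ⟨s, hs⟩)
  · simp only [projIcc_right, projIcc_of_mem _ hs]
    exact congrArg Subtype.val (F.apply_one ⟨s, hs⟩)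
  · simp [h₀.2.2.1]
  · simp [h₀.2.2.2]

theorem PathHomotopicIn.of_simplyConnectedSpace [SimplyConnectedSpace S]
    (h₀ : IsPathIn S γ₀ x y) (h₁ : IsPathIn S γ₁ x y) : PathHomotopicIn S γ₀ γ₁ :=
  .of_homotopic h₀ h₁ (SimplyConnectedSpace.paths_homotopic _ _)

theorem PathHomotopicIn.mono (h : PathHomotopicIn S γ₀ γ₁) (hST : S ⊆ T) :
    PathHomotopicIn T γ₀ γ₁ :=
  let ⟨H, hc, hm, h₀, h₁, hl, hr⟩ := h
  ⟨H, hc, fun p hp ↦ hST (hm p hp), h₀, h₁, hl, hr⟩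

end PathHomotopy

section RetractionCone

variable {E : Type*} [AddCommGroup E] [Module ℝ E] {γ : ℝ → E} {x y : E}

def retractionCone (γ : ℝ → E) (x : E) : Set E :=
  ⋃ s ∈ Icc (0:ℝ) 1, segment ℝ x (γ s)

theorem starConvex_retractionCone : StarConvex ℝ x (retractionCone γ x) :=
  starConvex_iUnion₂ fun _ _ ↦ (convex_segment _ _).starConvex (left_mem_segment _ _ _)

theorem retractionCone_subset {T : Set E}
    (h : ∀ s ∈ Icc (0:ℝ) 1, ∀ t ∈ Icc (0:ℝ) 1, (1 - t) • γ s + t • x ∈ T) :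
    retractionCone γ x ⊆ T := by
  simp only [retractionCone, iUnion_subset_iff, segment_symm ℝ x, segment_eq_image,
    image_subset_iff]
  exact h

variable [TopologicalSpace E]

theorem IsPathIn.retractionCone {S : Set E} (h : IsPathIn S γ x y) :
    IsPathIn (retractionCone γ x) γ x y :=
  ⟨h.1, fun _ hs ↦ mem_biUnion hs (right_mem_segment _ _ _), h.2.2⟩

theorem isPathIn_linePath_retractionCone [ContinuousAdd E] [ContinuousSMul ℝ E]
    (hy : γ 1 = y) : IsPathIn (retractionCone γ x) (linePath x y) x y := by
  refine ⟨by unfold linePath; fun_prop, fun u hu ↦ ?_, by simp [linePath], by simp [linePath]⟩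
  refine mem_biUnion (right_mem_Icc.2 zero_le_one) ?_
  rw [hy, segment_eq_image]
  exact ⟨u, hu, rfl⟩

instance [ContinuousAdd E] [ContinuousSMul ℝ E] :
    SimplyConnectedSpace (retractionCone γ x) :=
  haveI := (starConvex_retractionCone (γ := γ)).contractibleSpace
    ⟨x, mem_biUnion (left_mem_Icc.2 zero_le_one) (left_mem_segment _ _ _)⟩
  inferInstance

end RetractionCone

theorem stmt_14_general {n : ℕ} (𝒳 𝒪 : Set (EuclideanSpace ℝ (Fin n)))
    (hXconv : Convex ℝ 𝒳)
    (γ : ℝ → EuclideanSpace ℝ (Fin n)) (xa xr : EuclideanSpace ℝ (Fin n))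
    (hγ : IsPathIn (closure 𝒳 \ interior 𝒪) γ xa xr)
    (hlin : ∀ s ∈ Icc (0:ℝ) 1, ∀ t ∈ Icc (0:ℝ) 1, (1 - t) • γ s + t • xa ∉ interior 𝒪) :
    PathHomotopicIn (closure 𝒳 \ interior 𝒪) γ (linePath xa xr) := by
  have hcone : retractionCone γ xa ⊆ closure 𝒳 \ interior 𝒪 :=
    retractionCone_subset fun s hs t ht ↦
      ⟨hXconv.closure (hγ.2.1 s hs).1 hγ.left_mem.1 (by linarith [ht.2]) ht.1 (by ring),
        hlin s hs t ht⟩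
  exact (PathHomotopicIn.of_simplyConnectedSpace hγ.retractionCone
    (isPathIn_linePath_retractionCone hγ.2.2.2)).mono hcone

/-- A tether configuration that is non-entangled under the Obstacle-free Linear Homotopy
definition is path-homotopic within the free workspace to the straight-line path from the
anchor to the robot. -/
theorem stmt_14 {n : ℕ} (𝒳 𝒪 : Set (EuclideanSpace ℝ (Fin n)))
    (hXopen : IsOpen 𝒳) (hXconv : Convex ℝ 𝒳) (hOclosed : IsClosed 𝒪) (hOX : 𝒪 ⊆ 𝒳)
    (γ : ℝ → EuclideanSpace ℝ (Fin n)) (xa xr : EuclideanSpace ℝ (Fin n))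
    (hγ : IsPathIn (closure 𝒳 \ interior 𝒪) γ xa xr)
    (hlin : ∀ s ∈ Icc (0:ℝ) 1, ∀ t ∈ Icc (0:ℝ) 1, (1 - t) • γ s + t • xa ∉ interior 𝒪) :
    PathHomotopicIn (closure 𝒳 \ interior 𝒪) γ (linePath xa xr) :=
  stmt_14_general 𝒳 𝒪 hXconv γ xa xr hγ hlin
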